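/- Let N ≥ 2 and let D_1, ..., D_N ∈ F[z]^{m×m} be nonsingular, such that every subset of N-1 of these matrices is mutually left coprime but the full set is not. If z_* lies in the algebraic closure of F and ξ = (ξ_1, ..., ξ_{N-1}) with ξ_i ∈ F(z_*)^{1×m} is a nonzero vector with ξ · D_N(z_*) = 0, where D_N is the staircase block matrix with blocks D_1, ..., D_N, then ξ_1 ≠ 0, ξ_{N-1} ≠ 0, ξ_{i-1} + ξ_i ≠ 0 for 2 ≤ i ≤ N-1, and det(D_i(z_*)) = 0 for all i = 1, ..., N. -/
import Mathlib


/-- The staircase block matrix `𝒟 ∈ F[z]^{m(M-1) × mM}` with block rows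
`(D₁, D₂, 0, …, 0), (0, D₂, D₃, 0, …, 0), …, (0, …, 0, D_{M-1}, D_M)`. -/
noncomputable def staircase {F : Type*} [Field F] {m M : ℕ}
    (D : Fin M → Matrix (Fin m) (Fin m) (Polynomial F)) :
    Matrix (Fin (M - 1) × Fin m) (Fin M × Fin m) (Polynomial F) :=
  Matrix.of fun r c =>
    if (c.1 : ℕ) = (r.1 : ℕ) ∨ (c.1 : ℕ) = (r.1 : ℕ) + 1 then D c.1 r.2 c.2 else 0

/-- `D₁, …, D_M` are mutually left coprime iff the staircase matrix has full row rank
`m (M - 1)` at every point of the algebraic closure (Fuhrmann–Helmke criterion). -/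
def MutuallyLeftCoprime {F : Type*} [Field F] {m M : ℕ}
    (D : Fin M → Matrix (Fin m) (Fin m) (Polynomial F)) : Prop :=
  ∀ z : AlgebraicClosure F,
    ((staircase D).map (Polynomial.aeval z)).rank = m * (M - 1)

section Aux
open Module Matrix
variable {K : Type*} [Field K] {m : ℕ}

lemma aux_left_kernel_triv {R C : Type*} [Fintype R] [Fintype C]
    (A : Matrix R C K) (h : A.rank = Fintype.card R) {x : R → K}
    (hx : Matrix.vecMul x A = 0) : x = 0 := by
  have hT : Aᵀ.rank = Fintype.card R := by rwa [Matrix.rank_transpose]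
  have h1 := LinearMap.finrank_range_add_finrank_ker Aᵀ.mulVecLin
  rw [Module.finrank_fintype_fun_eq_card] at h1
  have h2 : finrank K (LinearMap.range Aᵀ.mulVecLin) = Fintype.card R := hT
  have hk : finrank K (LinearMap.ker Aᵀ.mulVecLin) = 0 := by omega
  have hbot : LinearMap.ker Aᵀ.mulVecLin = ⊥ := Submodule.finrank_eq_zero.mp hk
  have hx' : x ∈ LinearMap.ker Aᵀ.mulVecLin := by
    simp only [LinearMap.mem_ker, Matrix.mulVecLin_apply, Matrix.mulVec_transpose]
    exact hx
  rw [hbot] at hx'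
  simpa using hx'

noncomputable def extend {M : ℕ} (ξ : Fin M → Fin m → K) (t : ℕ) : Fin m → K :=
  if h : t < M then ξ ⟨t, h⟩ else 0

lemma extend_lt {M : ℕ} (ξ : Fin M → Fin m → K) {t : ℕ} (h : t < M) :
    extend ξ t = ξ ⟨t, h⟩ := dif_pos h

lemma extend_ge {M : ℕ} (ξ : Fin M → Fin m → K) {t : ℕ} (h : M ≤ t) :
    extend ξ t = 0 := dif_neg (by omega)

noncomputable def coefv {M : ℕ} (η : Fin (M - 1) → Fin m → K) (j : Fin M) : Fin m → K :=
  extend η (j : ℕ) + (if 0 < (j : ℕ) then extend η ((j : ℕ) - 1) else 0)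

lemma coefv_mk {M : ℕ} (η : Fin (M - 1) → Fin m → K) (t : ℕ) (h : t < M) :
    coefv η ⟨t, h⟩ = extend η t + (if 0 < t then extend η (t - 1) else 0) := rfl

lemma sum_ite_nat {M : ℕ} {α : Type*} [AddCommMonoid α] (g : Fin M → α) (t : ℕ) :
    (∑ r : Fin M, if t = (r : ℕ) then g r else 0) = if h : t < M then g ⟨t, h⟩ else 0 := by
  split_ifs with h
  · rw [Finset.sum_eq_single (⟨t, h⟩ : Fin M)]
    · simp
    · intro b _ hb
      rw [if_neg]
      intro hc
      exact hb (Fin.ext (by simp only [Fin.val_mk]; omega))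
    · intro hmem; exact absurd (Finset.mem_univ _) hmem
  · apply Finset.sum_eq_zero
    intro b _
    rw [if_neg]
    intro hc
    exact h (hc ▸ b.2)

lemma sum_ite_nat' {M : ℕ} {α : Type*} [AddCommMonoid α] (g : Fin M → α) (t : ℕ) :
    (∑ r : Fin M, if t = (r : ℕ) + 1 then g r else 0)
      = if h : 0 < t ∧ t - 1 < M then g ⟨t - 1, h.2⟩ else 0 := by
  split_ifs with h
  · rw [Finset.sum_eq_single (⟨t - 1, h.2⟩ : Fin M)]
    · simp only [Fin.val_mk]
      rw [if_pos (by omega : t = t - 1 + 1)]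
    · intro b _ hb
      rw [if_neg]
      intro hc
      exact hb (Fin.ext (by simp only [Fin.val_mk]; omega))
    · intro hmem; exact absurd (Finset.mem_univ _) hmem
  · apply Finset.sum_eq_zero
    intro b _
    rw [if_neg]
    intro hc
    have hb2 := b.2
    exact h ⟨by omega, by omega⟩

lemma vecMul_staircase {F : Type*} [Field F] {m M : ℕ}
    (D : Fin M → Matrix (Fin m) (Fin m) (Polynomial F)) (z : AlgebraicClosure F)
    (η : Fin (M - 1) → Fin m → AlgebraicClosure F) (c : Fin M × Fin m) :
    Matrix.vecMul (fun rc : Fin (M - 1) × Fin m => η rc.1 rc.2)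
      ((staircase D).map (Polynomial.aeval z)) c =
    Matrix.vecMul (coefv η c.1) ((D c.1).map (Polynomial.aeval z)) c.2 := by
  classical
  obtain ⟨c1, c2⟩ := c
  have hc1 := c1.2
  set g : Fin (M - 1) → AlgebraicClosure F :=
    fun r1 => ∑ r2 : Fin m, η r1 r2 * Polynomial.aeval z (D c1 r2 c2) with hg
  have lhs_eq : Matrix.vecMul (fun rc : Fin (M - 1) × Fin m => η rc.1 rc.2)
      ((staircase D).map (Polynomial.aeval z)) (c1, c2)
      = (∑ r1 : Fin (M - 1), if (c1 : ℕ) = (r1 : ℕ) then g r1 else 0)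
        + (∑ r1 : Fin (M - 1), if (c1 : ℕ) = (r1 : ℕ) + 1 then g r1 else 0) := by
    rw [Matrix.vecMul, dotProduct, Fintype.sum_prod_type, ← Finset.sum_add_distrib]
    refine Finset.sum_congr rfl fun r1 _ => ?_
    have hterm : ∀ r2 : Fin m,
        (fun rc : Fin (M - 1) × Fin m => η rc.1 rc.2) (r1, r2) *
          ((staircase D).map (Polynomial.aeval z)) (r1, r2) (c1, c2)
        = if (c1 : ℕ) = (r1 : ℕ) ∨ (c1 : ℕ) = (r1 : ℕ) + 1
            then η r1 r2 * Polynomial.aeval z (D c1 r2 c2) else 0 := by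
      intro r2
      simp only [Matrix.map_apply, staircase, Matrix.of_apply]
      split_ifs with h
      · rfl
      · simp
    simp only [hterm]
    by_cases hP : (c1 : ℕ) = (r1 : ℕ) <;> by_cases hQ : (c1 : ℕ) = (r1 : ℕ) + 1
    · omega
    · simp [hP, hQ, hg]
    · simp [hP, hQ, hg]
    · simp [hP, hQ]
  have rhs_eq : Matrix.vecMul (coefv η c1) ((D c1).map (Polynomial.aeval z)) c2
      = (if h : (c1 : ℕ) < M - 1 then g ⟨c1, h⟩ else 0)
        + (if h : 0 < (c1 : ℕ) ∧ (c1 : ℕ) - 1 < M - 1 then g ⟨(c1 : ℕ) - 1, h.2⟩ else 0) := by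
    rw [Matrix.vecMul, dotProduct]
    simp only [coefv, Pi.add_apply, extend, Matrix.map_apply]
    by_cases h1 : (c1 : ℕ) < M - 1 <;> by_cases h2 : 0 < (c1 : ℕ)
    · have h3 : (c1 : ℕ) - 1 < M - 1 := by omega
      simp [h1, h2, h3, hg, add_mul, Finset.sum_add_distrib]
    · simp [h1, h2, hg]
    · have h3 : (c1 : ℕ) - 1 < M - 1 := by omega
      simp [h1, h2, h3, hg, add_mul, Finset.sum_add_distrib]
    · simp [h1, h2]
  rw [lhs_eq, rhs_eq, sum_ite_nat, sum_ite_nat']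

end Aux

/-- Let `D₁, …, D_N` be nonsingular, every subset of `N - 1` of them mutually left
coprime but not the full set. If `ξ = (ξ₁, …, ξ_{N-1}) ≠ 0` satisfies
`ξ · 𝒟_N(z⋆) = 0`, then `ξ₁ ≠ 0`, `ξ_{N-1} ≠ 0`, `ξ_{i-1} + ξ_i ≠ 0` for
`2 ≤ i ≤ N - 1`, and `det (D_i(z⋆)) = 0` for all `i`. -/
theorem stmt19 (F : Type*) [Field F] (m N : ℕ) (hN : 2 ≤ N)
    (D : Fin N → Matrix (Fin m) (Fin m) (Polynomial F))
    (hns : ∀ i, (D i).det ≠ 0)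
    (hsub : ∀ i : Fin N, MutuallyLeftCoprime (fun j : Fin (N - 1) =>
      D (Fin.cast (by omega : N - 1 + 1 = N)
        ((Fin.cast (by omega : N = N - 1 + 1) i).succAbove j))))
    (hnot : ¬ MutuallyLeftCoprime D)
    (z : AlgebraicClosure F) (ξ : Fin (N - 1) → Fin m → AlgebraicClosure F)
    (hξ : ξ ≠ 0)
    (hker : Matrix.vecMul (fun rc : Fin (N - 1) × Fin m => ξ rc.1 rc.2)
        ((staircase D).map (Polynomial.aeval z)) = 0) :
    ξ ⟨0, by omega⟩ ≠ 0 ∧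
    ξ ⟨N - 2, by omega⟩ ≠ 0 ∧
    (∀ i : Fin (N - 1), ∀ h : (i : ℕ) + 1 < N - 1,
        ξ i + ξ ⟨(i : ℕ) + 1, h⟩ ≠ 0) ∧
    (∀ i : Fin N, ((D i).map (Polynomial.aeval z)).det = 0) := by
  classical
  have hveq : ∀ i : Fin N,
      Matrix.vecMul (coefv ξ i) ((D i).map (Polynomial.aeval z)) = 0 := by
    intro i
    funext c2
    have h := congr_fun hker (i, c2)
    rw [vecMul_staircase D z ξ (i, c2)] at h
    simpa using h
  have hv' : ∀ i : Fin N, coefv ξ i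
      = extend ξ (i : ℕ) + (if 0 < (i : ℕ) then extend ξ ((i : ℕ) - 1) else 0) :=
    fun i => rfl
  have hkey : ∀ k : Fin N, coefv ξ k = 0 → ξ = 0 := by
    intro k hvk
    have hk2 := k.2
    have hvk' : extend ξ (k : ℕ)
        + (if 0 < (k : ℕ) then extend ξ ((k : ℕ) - 1) else 0) = 0 := by
      rw [← hv' k]; exact hvk
    set η : Fin (N - 1 - 1) → Fin m → AlgebraicClosure F :=
      fun j => if (j : ℕ) < (k : ℕ) then extend ξ (j : ℕ)
               else -extend ξ ((j : ℕ) + 1) with hηdef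
    have hext_η : ∀ t : ℕ, extend η t =
        if t < N - 1 - 1 then
          (if t < (k : ℕ) then extend ξ t else -extend ξ (t + 1)) else 0 := by
      intro t
      by_cases h : t < N - 1 - 1
      · rw [extend_lt η h, if_pos h, hηdef]
      · rw [extend_ge η (by omega), if_neg h]
    have hscal : ∀ a : ℕ, a < N - 1 →
        extend η a + (if 0 < a then extend η (a - 1) else 0)
          = (if a < (k : ℕ) then (1 : AlgebraicClosure F) else -1) •
              (extend ξ (if a < (k : ℕ) then a else a + 1) +
                (if 0 < (if a < (k : ℕ) then a else a + 1) then
                  extend ξ ((if a < (k : ℕ) then a else a + 1) - 1) else 0)) := by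
      intro a ha
      rcases Nat.lt_trichotomy a (k : ℕ) with h | h | h
      · simp only [if_pos h, one_smul]
        by_cases h1 : a < N - 1 - 1
        · rw [hext_η, if_pos h1, if_pos h]
          by_cases h0 : 0 < a
          · rw [if_pos h0, if_pos h0, hext_η,
              if_pos (by omega : a - 1 < N - 1 - 1), if_pos (by omega : a - 1 < (k : ℕ))]
          · rw [if_neg h0, if_neg h0]
        · have hXa : extend ξ a = 0 := by
            have h2 := hvk'
            rw [show (k : ℕ) = N - 1 by omega, extend_ge ξ (le_refl _),
              if_pos (by omega : 0 < N - 1), zero_add] at h2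
            rw [show a = N - 1 - 1 by omega]
            exact h2
          rw [hext_η, if_neg h1, hXa, zero_add, zero_add]
          by_cases h0 : 0 < a
          · rw [if_pos h0, if_pos h0, hext_η,
              if_pos (by omega : a - 1 < N - 1 - 1), if_pos (by omega : a - 1 < (k : ℕ))]
          · rw [if_neg h0, if_neg h0]
      · simp only [if_neg (show ¬ a < (k : ℕ) by omega), if_pos (Nat.succ_pos a),
          Nat.add_sub_cancel, neg_one_smul, neg_add]
        by_cases h1 : a < N - 1 - 1
        · rw [hext_η, if_pos h1, if_neg (show ¬ a < (k : ℕ) by omega)]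
          by_cases h0 : 0 < a
          · rw [if_pos h0, hext_η, if_pos (by omega : a - 1 < N - 1 - 1),
              if_pos (by omega : a - 1 < (k : ℕ))]
            have h2 := hvk'
            rw [← h, if_pos h0] at h2
            rw [eq_neg_of_add_eq_zero_left h2, neg_neg]
          · have h2 := hvk'
            rw [← h, if_neg h0, add_zero] at h2
            rw [if_neg h0, h2, neg_zero, add_zero]
        · have hXa1 : extend ξ (a + 1) = 0 := extend_ge ξ (by omega)
          rw [hext_η, if_neg h1, hXa1, neg_zero]
          by_cases h0 : 0 < a
          · rw [if_pos h0, hext_η, if_pos (by omega : a - 1 < N - 1 - 1),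
              if_pos (by omega : a - 1 < (k : ℕ))]
            have h2 := hvk'
            rw [← h, if_pos h0] at h2
            rw [eq_neg_of_add_eq_zero_left h2, neg_neg]
          · have h2 := hvk'
            rw [← h, if_neg h0, add_zero] at h2
            rw [if_neg h0, h2, neg_zero]
      · simp only [if_neg (show ¬ a < (k : ℕ) by omega), if_pos (Nat.succ_pos a),
          Nat.add_sub_cancel, neg_one_smul, neg_add]
        have h0 : 0 < a := by omega
        rw [if_pos h0]
        by_cases h1 : a < N - 1 - 1
        · rw [hext_η, if_pos h1, if_neg (by omega : ¬ a < (k : ℕ)), hext_η,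
            if_pos (by omega : a - 1 < N - 1 - 1), if_neg (by omega : ¬ a - 1 < (k : ℕ)),
            show a - 1 + 1 = a by omega]
        · have hXa1 : extend ξ (a + 1) = 0 := extend_ge ξ (by omega)
          rw [hext_η, if_neg h1, hext_η, if_pos (by omega : a - 1 < N - 1 - 1),
            if_neg (by omega : ¬ a - 1 < (k : ℕ)), show a - 1 + 1 = a by omega,
            hXa1, neg_zero, zero_add]
    have hηker : Matrix.vecMul (fun rc : Fin (N - 1 - 1) × Fin m => η rc.1 rc.2)
        ((staircase (fun j : Fin (N - 1) =>
          D (Fin.cast (by omega : N - 1 + 1 = N)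
            ((Fin.cast (by omega : N = N - 1 + 1) k).succAbove j)))).map
              (Polynomial.aeval z)) = 0 := by
      funext c
      obtain ⟨c1, c2⟩ := c
      rw [vecMul_staircase]
      show Matrix.vecMul (coefv η c1)
        ((D (Fin.cast (by omega : N - 1 + 1 = N)
          ((Fin.cast (by omega : N = N - 1 + 1) k).succAbove c1))).map
            (Polynomial.aeval z)) c2 = 0
      set i : Fin N := Fin.cast (by omega : N - 1 + 1 = N)
        ((Fin.cast (by omega : N = N - 1 + 1) k).succAbove c1) with hidef
      have hival : (i : ℕ) = if (c1 : ℕ) < (k : ℕ) then (c1 : ℕ) else (c1 : ℕ) + 1 := by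
        rw [hidef, Fin.coe_cast, Fin.succAbove]
        rcases Nat.lt_or_ge (c1 : ℕ) (k : ℕ) with hlt | hge
        · rw [if_pos (show Fin.castSucc c1 < Fin.cast (by omega) k from by
            rw [Fin.lt_def]; simpa using hlt), if_pos hlt]
          simp
        · rw [if_neg (show ¬ Fin.castSucc c1 < Fin.cast (by omega) k from by
            rw [Fin.lt_def]; simp; omega), if_neg (by omega : ¬ (c1 : ℕ) < (k : ℕ))]
          simp
      have h1 : coefv η c1
          = (if (c1 : ℕ) < (k : ℕ) then (1 : AlgebraicClosure F) else -1) • coefv ξ i := by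
        simp only [coefv]
        rw [hscal (c1 : ℕ) c1.2, ← hival]
      rw [h1, Matrix.smul_vecMul, hveq i, smul_zero]
      simp
    have hη0 : (fun rc : Fin (N - 1 - 1) × Fin m => η rc.1 rc.2) = 0 :=
      aux_left_kernel_triv _
        ((hsub k z).trans (by simp [Fintype.card_prod, Fintype.card_fin, mul_comm])) hηker
    have hextη0 : ∀ t : ℕ, extend η t = 0 := by
      intro t
      by_cases h : t < N - 1 - 1
      · rw [extend_lt η h]
        funext x
        exact congr_fun hη0 (⟨t, h⟩, x)
      · exact extend_ge η (by omega)
    have hXlt : ∀ t : ℕ, t < N - 1 - 1 → t < (k : ℕ) → extend ξ t = 0 := by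
      intro t h1 h2
      have h3 := (hext_η t).symm.trans (hextη0 t)
      rwa [if_pos h1, if_pos h2] at h3
    have hXgt : ∀ t : ℕ, t < N - 1 - 1 → ¬ t < (k : ℕ) → extend ξ (t + 1) = 0 := by
      intro t h1 h2
      have h3 := (hext_η t).symm.trans (hextη0 t)
      rw [if_pos h1, if_neg h2] at h3
      simpa using h3
    have hXall : ∀ t : ℕ, t < N - 1 → extend ξ t = 0 := by
      intro t ht
      rcases Nat.lt_trichotomy t (k : ℕ) with h | h | h
      · by_cases h1 : t < N - 1 - 1
        · exact hXlt t h1 h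
        · have h2 := hvk'
          rw [show (k : ℕ) = N - 1 by omega, extend_ge ξ (le_refl _),
            if_pos (by omega : 0 < N - 1), zero_add] at h2
          rw [show t = N - 1 - 1 by omega]
          exact h2
      · rcases Nat.eq_zero_or_pos t with h0 | h0
        · have h2 := hvk'
          rw [← h, if_neg (by omega : ¬ 0 < t), add_zero] at h2
          exact h2
        · have h2 := hvk'
          rw [← h, if_pos h0] at h2
          have h3 : extend ξ (t - 1) = 0 := by
            by_cases h1 : t - 1 < N - 1 - 1
            · exact hXlt _ h1 (by omega)
            · exact absurd ht (by omega)
          rw [h3, add_zero] at h2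
          exact h2
      · have h1 : t - 1 < N - 1 - 1 := by omega
        have h4 := hXgt (t - 1) h1 (by omega)
        rwa [show t - 1 + 1 = t by omega] at h4
    funext j
    have h5 := hXall (j : ℕ) j.2
    rw [extend_lt ξ j.2, Fin.eta] at h5
    simpa using h5
  refine ⟨?_, ?_, ?_, ?_⟩
  · intro h0
    apply hξ
    apply hkey ⟨0, by omega⟩
    rw [coefv_mk, if_neg (lt_irrefl 0), add_zero, extend_lt ξ (by omega : 0 < N - 1)]
    exact h0
  · intro h0
    apply hξ
    apply hkey ⟨N - 1, by omega⟩
    rw [coefv_mk, extend_ge ξ (le_refl _), if_pos (by omega : 0 < N - 1), zero_add,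
      extend_lt ξ (by omega : N - 1 - 1 < N - 1)]
    rw [show (⟨N - 1 - 1, by omega⟩ : Fin (N - 1)) = ⟨N - 2, by omega⟩ from
      Fin.ext (by simp only [Fin.val_mk]; omega)]
    exact h0
  · intro i h hsum
    apply hξ
    apply hkey ⟨(i : ℕ) + 1, by omega⟩
    rw [coefv_mk, if_pos (Nat.succ_pos _), Nat.add_sub_cancel,
      extend_lt ξ (show (i : ℕ) + 1 < N - 1 from h), extend_lt ξ i.2, Fin.eta]
    rw [add_comm]
    exact hsum
  · intro i
    by_contra hdet
    have hu : IsUnit ((D i).map (Polynomial.aeval z)) :=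
      (Matrix.isUnit_iff_isUnit_det _).mpr (Ne.isUnit hdet)
    have hinj := Matrix.vecMul_injective_iff_isUnit.mpr hu
    have h0 : Matrix.vecMul (coefv ξ i) ((D i).map (Polynomial.aeval z))
        = Matrix.vecMul (0 : Fin m → AlgebraicClosure F) ((D i).map (Polynomial.aeval z)) := by
      rw [hveq i, Matrix.zero_vecMul]
    exact hξ (hkey i (hinj h0))
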